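/- For symmetric positive semidefinite P, ‖(R + H P Hᵀ)^{-1/2}((R + H P Hᵀ)^{1/2} + R^{1/2})^{-1}‖ ≤ (1/2)‖R^{-1}‖ in spectral norm. -/

import Mathlib

open Matrix
open scoped Matrix.Norms.L2Operator

section
open scoped ComplexOrder

/-- The square root of a positive semidefinite matrix, as defined in Mathlib (Dec 2024),
since removed from Mathlib. -/
noncomputable def Matrix.PosSemidef.sqrt {n 𝕜 : Type*} [RCLike 𝕜] [Fintype n] [DecidableEq n]
    {A : Matrix n n 𝕜} (hA : A.PosSemidef) : Matrix n n 𝕜 :=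
  (hA.1.eigenvectorUnitary : Matrix n n 𝕜) *
    diagonal ((fun x : ℝ => (x : 𝕜)) ∘ (fun x : ℝ => √x) ∘ hA.1.eigenvalues) *
    (star hA.1.eigenvectorUnitary : Matrix n n 𝕜)

end

/-!
Put `c = ‖R⁻¹‖⁻¹`, the bottom of the spectrum of `R`. In the Loewner order
`c ≤ R ≤ R + H P Hᵀ`, so by the spectral mapping theorem both square roots `S` and `T` of
`R + H P Hᵀ` and `R` are bounded below by `√c`, and `S + T` by `2√c`. An operator bounded below by
`r > 0` has inverse of norm at most `r⁻¹`, so the norm in question is at most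
`(√c)⁻¹ (2√c)⁻¹ = ‖R⁻¹‖ / 2`.
-/

section SpectralBounds

variable {A : Type*} [NormedRing A] [StarRing A] [NormedAlgebra ℝ A] [PartialOrder A]
  [StarOrderedRing A] [IsometricContinuousFunctionalCalculus ℝ A IsSelfAdjoint]
  [NonnegSpectrumClass ℝ A]

lemma norm_ringInverse_le_of_algebraMap_le {a : A} {r : ℝ} (hr : 0 < r)
    (h : algebraMap ℝ A r ≤ a) (ha : IsSelfAdjoint a := by cfc_tac) :
    ‖Ring.inverse a‖ ≤ r⁻¹ := by
  rw [algebraMap_le_iff_le_spectrum] at h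
  have hunit : IsUnit a := spectrum.isUnit_of_zero_notMem ℝ fun h0 => (h 0 h0).not_gt hr
  rw [← cfc_ringInverse_id (R := ℝ) a hunit]
  refine norm_cfc_le (by positivity) fun x hx => ?_
  rw [norm_inv, Real.norm_of_nonneg (hr.le.trans (h x hx))]
  exact inv_anti₀ hr (h x hx)

lemma algebraMap_inv_norm_ringInverse_le {a : A} (ha : IsStrictlyPositive a) :
    algebraMap ℝ A ‖Ring.inverse a‖⁻¹ ≤ a := by
  rw [algebraMap_le_iff_le_spectrum ha.isSelfAdjoint]
  intro x hx
  have hx0 := ha.spectrum_pos hx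
  refine inv_le_of_inv_le₀ hx0 ?_
  have := norm_apply_le_norm_cfc (fun x : ℝ => x⁻¹) a hx
    (continuousOn_inv₀.mono fun y hy => (ha.spectrum_pos hy).ne') ha.isSelfAdjoint
  rwa [cfc_ringInverse_id (R := ℝ) a ha.isUnit ha.isSelfAdjoint, norm_inv,
    Real.norm_of_nonneg hx0.le] at this

lemma algebraMap_sqrt_le_cfc_sqrt {a : A} {r : ℝ} (h : algebraMap ℝ A r ≤ a)
    (ha : IsSelfAdjoint a := by cfc_tac) :
    algebraMap ℝ A √r ≤ cfc Real.sqrt a := by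
  rw [algebraMap_le_iff_le_spectrum] at h
  rw [algebraMap_le_cfc_iff Real.sqrt √r a]
  exact fun x hx => Real.sqrt_le_sqrt (h x hx)

end SpectralBounds

lemma Matrix.PosSemidef.sqrt_eq_cfc {n : Type*} [Fintype n] [DecidableEq n] {A : Matrix n n ℝ}
    (hA : A.PosSemidef) : hA.sqrt = cfc Real.sqrt A := by
  rw [hA.1.cfc_eq, IsHermitian.cfc, Unitary.conjStarAlgAut_apply, Matrix.PosSemidef.sqrt]

open scoped MatrixOrder in
/-- `‖(R + H P Hᵀ)^{-1/2} ((R + H P Hᵀ)^{1/2} + R^{1/2})⁻¹‖ ≤ (1/2) ‖R⁻¹‖`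
for `P` symmetric positive semidefinite. -/
theorem stmt_14 {d q : ℕ} (P : Matrix (Fin d) (Fin d) ℝ) (hP : P.PosSemidef)
    (H : Matrix (Fin q) (Fin d) ℝ) (R : Matrix (Fin q) (Fin q) ℝ) (hR : R.PosDef)
    (hA : (R + H * P * Hᵀ).PosDef) :
    ‖(hA.posSemidef.sqrt)⁻¹ * (hA.posSemidef.sqrt + hR.posSemidef.sqrt)⁻¹‖ ≤
      (1 / 2) * ‖R⁻¹‖ := by
  nontriviality Matrix (Fin q) (Fin q) ℝ
  simp only [hA.posSemidef.sqrt_eq_cfc, hR.posSemidef.sqrt_eq_cfc, nonsing_inv_eq_ringInverse]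
  set S := cfc Real.sqrt (R + H * P * Hᵀ)
  set T := cfc Real.sqrt R
  set c := ‖Ring.inverse R‖⁻¹
  have hc : 0 < c := inv_pos.2 (norm_pos_iff.2 hR.isUnit.ringInverse.ne_zero)
  have hcR : algebraMap ℝ _ c ≤ R := algebraMap_inv_norm_ringInverse_le hR.isStrictlyPositive
  have hRA : R ≤ R + H * P * Hᵀ :=
    le_add_of_nonneg_right (hP.mul_mul_conjTranspose_same H).nonneg
  have hS : algebraMap ℝ _ √c ≤ S := algebraMap_sqrt_le_cfc_sqrt (hcR.trans hRA)
  have hT : algebraMap ℝ _ √c ≤ T := algebraMap_sqrt_le_cfc_sqrt hcR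
  have hST : algebraMap ℝ _ (2 * √c) ≤ S + T := by
    rw [two_mul, map_add]
    exact add_le_add hS hT
  have hc' : 0 < √c := Real.sqrt_pos.2 hc
  calc _ ≤ ‖Ring.inverse S‖ * ‖Ring.inverse (S + T)‖ := norm_mul_le _ _
    _ ≤ (√c)⁻¹ * (2 * √c)⁻¹ :=
        mul_le_mul (norm_ringInverse_le_of_algebraMap_le hc' hS)
          (norm_ringInverse_le_of_algebraMap_le (by positivity) hST) (norm_nonneg _)
          (by positivity)
    _ = 1 / 2 * ‖Ring.inverse R‖ := by
        rw [← mul_inv, mul_left_comm, Real.mul_self_sqrt hc.le, mul_inv, inv_inv]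
        ring
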